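/- arXiv:1306.6843 — 3 statements merged into one kernel-verified Lean document; each statement's English description precedes it below -/
import Mathlib

section
/- In the EAMP CG G' obtained from an AMP CG G by adding, for each node A, an error node ε^A with edge ε^A → A, and replacing each undirected edge A − B of G by ε^A − ε^B, the resulting graph G' contains no semidirected cycle; that is, G' is a chain graph over V ∪ ε. -/
/- Mixed graphs with directed and undirected edges. -/
structure MixedGraph (γ : Type*) where
  dir : γ → γ → Prop
  undir : γ → γ → Prop
  undir_symm : ∀ a b, undir a b → undir b a

namespace MixedGraph

variable {β : Type*} (G : MixedGraph β)

/-- Two nodes are adjacent if joined by some edge. -/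
def adj (a b : β) : Prop := G.dir a b ∨ G.dir b a ∨ G.undir a b

/-- The graph is simple: no loops and at most one edge between any pair. -/
def Simple : Prop :=
  (∀ a, ¬ G.dir a a) ∧ (∀ a, ¬ G.undir a a) ∧
  (∀ a b, G.dir a b → ¬ G.dir b a) ∧ (∀ a b, G.dir a b → ¬ G.undir a b)

/-- A semidirected cycle: a cycle whose first edge is directed and whose other
edges are directed or undirected (all pointing forwards). -/
def HasSemidirectedCycle : Prop :=
  ∃ (n : ℕ) (f : Fin (n + 2) → β),
    f 0 = f (Fin.last (n + 1)) ∧ G.dir (f 0) (f 1) ∧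
    ∀ i : Fin (n + 1), G.dir (f i.castSucc) (f i.succ) ∨ G.undir (f i.castSucc) (f i.succ)

/-- A chain graph: a simple graph with no semidirected cycle. -/
def IsChainGraph : Prop := G.Simple ∧ ¬ G.HasSemidirectedCycle

/-- A DAG: a chain graph with no undirected edges. -/
def IsDAG : Prop := G.IsChainGraph ∧ ∀ a b, ¬ G.undir a b

/-- Parents of a set of nodes. -/
def pa (X : Set β) : Set β := {v | v ∉ X ∧ ∃ x ∈ X, G.dir v x}

/-- Strict ascendants of a set of nodes (strictly descending route to the set). -/
def san (W : Set β) : Set β := {v | v ∉ W ∧ ∃ w ∈ W, Relation.TransGen G.dir v w}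

/-- B is a triplex node between A and C: A → B ← C, A → B − C, or A − B ← C. -/
def triplex (A B C : β) : Prop :=
  (G.dir A B ∧ G.dir C B) ∨ (G.dir A B ∧ G.undir B C) ∨ (G.undir A B ∧ G.dir C B)

/-- B is a non-triplex node between A and C. -/
def nontriplex (A B C : β) : Prop :=
  G.adj A B ∧ G.adj B C ∧ ¬ G.triplex A B C

/-- A route: a nonempty sequence of consecutively adjacent nodes. -/
def IsRoute (l : List β) : Prop := l ≠ [] ∧ l.Chain' G.adj

/-- A path that is open given the determined set `D` (AMP path-based semantics). -/
def AMPOpenPath (D : Set β) (l : List β) : Prop :=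
  G.IsRoute l ∧ l.Nodup ∧
  (∀ A B C, [A, B, C] <:+: l → G.triplex A B C → B ∈ D ∪ G.san D) ∧
  (∀ A B C, [A, B, C] <:+: l → G.nontriplex A B C → B ∈ D →
    (G.undir A B ∧ G.undir B C ∧ ∃ p ∈ G.pa {B}, p ∉ D))

/-- A route that is open given the determined set `D` (AMP route-based semantics). -/
def AMPOpenRoute (D : Set β) (l : List β) : Prop :=
  G.IsRoute l ∧
  (∀ A B C, [A, B, C] <:+: l → G.triplex A B C → B ∈ D) ∧
  (∀ A B C, [A, B, C] <:+: l → G.nontriplex A B C → B ∉ D)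

/-- AMP separation (path-based) of X and Y given determined set D. -/
def AMPSep (D X Y : Set β) : Prop :=
  ∀ (l : List β) (x y : β), x ∈ X → y ∈ Y → l.head? = some x → l.getLast? = some y →
    ¬ G.AMPOpenPath D l

/-- AMP separation (route-based) of X and Y given determined set D. -/
def AMPSepRoute (D X Y : Set β) : Prop :=
  ∀ (l : List β) (x y : β), x ∈ X → y ∈ Y → l.head? = some x → l.getLast? = some y →
    ¬ G.AMPOpenRoute D l

/-- `s` is a collider section of the route `l`: a maximal undirected subroute of `l`
entered by arrowheads at both ends. -/
def IsColliderSection (l s : List β) : Prop :=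
  s ≠ [] ∧ List.Chain' G.undir s ∧
  ∃ pre post A C, l = pre ++ s ++ post ∧
    pre.getLast? = some A ∧ post.head? = some C ∧
    (∀ b, s.head? = some b → G.dir A b) ∧ (∀ b, s.getLast? = some b → G.dir C b) ∧
    (∀ a b, pre.getLast? = some a → s.head? = some b → ¬ G.undir a b) ∧
    (∀ a b, s.getLast? = some a → post.head? = some b → ¬ G.undir a b)

/-- `s` is a non-collider section of the route `l`: a maximal undirected subroute of `l`
not entered by arrowheads at both ends. -/
def IsNonColliderSection (l s : List β) : Prop :=
  s ≠ [] ∧ List.Chain' G.undir s ∧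
  ∃ pre post, l = pre ++ s ++ post ∧
    (∀ a b, pre.getLast? = some a → s.head? = some b → ¬ G.undir a b) ∧
    (∀ a b, s.getLast? = some a → post.head? = some b → ¬ G.undir a b) ∧
    ¬ ((∃ A, pre.getLast? = some A ∧ ∀ b, s.head? = some b → G.dir A b) ∧
       (∃ C, post.head? = some C ∧ ∀ b, s.getLast? = some b → G.dir C b))

/-- A route that is open given the determined set `D` (LWF semantics). -/
def LWFOpenRoute (D : Set β) (l : List β) : Prop :=
  G.IsRoute l ∧
  (∀ s, G.IsColliderSection l s → ∃ x ∈ s, x ∈ D) ∧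
  (∀ s, G.IsNonColliderSection l s → ∀ x ∈ s, x ∉ D)

/-- LWF separation of X and Y given determined set D. -/
def LWFSep (D X Y : Set β) : Prop :=
  ∀ (l : List β) (x y : β), x ∈ X → y ∈ Y → l.head? = some x → l.getLast? = some y →
    ¬ G.LWFOpenRoute D l

/-- Closure of Z under a set `det` of deterministic relationships: `(S, a) ∈ det`
means that `a` is a function of `S`. -/
inductive Determined (det : Set (Set β × β)) (Z : Set β) : β → Prop
  | base : ∀ a, a ∈ Z → Determined det Z a
  | step : ∀ (S : Set β) (a : β), (S, a) ∈ det → (∀ b ∈ S, Determined det Z b) →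
      Determined det Z a

/-- The set D(Z) of nodes determined by Z. -/
def DSet (det : Set (Set β × β)) (Z : Set β) : Set β := {a | Determined det Z a}

end MixedGraph

section EAMP

variable {α : Type*}

/-- Directed edges of the EAMP CG: `inl` nodes are the original nodes,
`inr` nodes are the error nodes. -/
def eampDir (G : MixedGraph α) : (α ⊕ α) → (α ⊕ α) → Prop
  | Sum.inl x, Sum.inl y => G.dir x y
  | Sum.inr x, Sum.inl y => x = y
  | _, _ => False

/-- Undirected edges of the EAMP CG: `ε^A − ε^B` for each `A − B` of G. -/
def eampUndir (G : MixedGraph α) : (α ⊕ α) → (α ⊕ α) → Prop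
  | Sum.inr x, Sum.inr y => G.undir x y
  | _, _ => False

/-- The EAMP CG G' of an AMP CG G: add `ε^A → A` for each node A and replace
each undirected edge `A − B` by `ε^A − ε^B`. -/
def eamp (G : MixedGraph α) : MixedGraph (α ⊕ α) where
  dir := eampDir G
  undir := eampUndir G
  undir_symm := by
    rintro (x | x) (y | y) h <;>
      simp only [eampUndir] at h ⊢ <;>
      first
        | exact h.elim
        | exact G.undir_symm _ _ h

/-- The parents of A in G, embedded as nodes of the EAMP CG. -/
def eampPa (G : MixedGraph α) (A : α) : Set (α ⊕ α) := {x | ∃ B, G.dir B A ∧ x = Sum.inl B}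

/-- The deterministic relationships of the EAMP CG: each A is a function of
`pa_G(A) ∪ {ε^A}`, and each `ε^A` is a function of `pa_G(A) ∪ {A}`. -/
def eampDet (G : MixedGraph α) : Set (Set (α ⊕ α) × (α ⊕ α)) :=
  {p | (∃ A, p = (eampPa G A ∪ {Sum.inr A}, Sum.inl A)) ∨
       (∃ A, p = (eampPa G A ∪ {Sum.inl A}, Sum.inr A))}

/-- Marginalize the node B out of G: add `A → C` for every pair `A → B`, `B → C`,
then delete B together with all edges it participates in. -/
def marg {β : Type*} (G : MixedGraph β) (B : β) : MixedGraph β where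
  dir a c := a ≠ B ∧ c ≠ B ∧ (G.dir a c ∨ (G.dir a B ∧ G.dir B c))
  undir a c := a ≠ B ∧ c ≠ B ∧ G.undir a c
  undir_symm := by
    rintro a c ⟨h1, h2, h3⟩
    exact ⟨h2, h1, G.undir_symm _ _ h3⟩

/-- Marginalize a list of nodes out of G, one at a time. -/
def margList {β : Type*} (G : MixedGraph β) (L : List β) : MixedGraph β := L.foldl marg G

/-- Directed edges of the DAG G'': those of G' among `V ∪ ε`, plus
`ε^A → S_{ε^Aε^B} ← ε^B` for each undirected edge `ε^A − ε^B` of G'. -/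
def dagDir (G : MixedGraph α) : ((α ⊕ α) ⊕ Sym2 α) → ((α ⊕ α) ⊕ Sym2 α) → Prop
  | Sum.inl x, Sum.inl y => (eamp G).dir x y
  | Sum.inl (Sum.inr x), Sum.inr s => ∃ y, G.undir x y ∧ s = s(x, y)
  | _, _ => False

/-- The DAG G'' obtained from G' by replacing each `ε^A − ε^B` with
`ε^A → S_{ε^Aε^B} ← ε^B`, where the selection nodes are fresh. -/
def dagOf (G : MixedGraph α) : MixedGraph ((α ⊕ α) ⊕ Sym2 α) where
  dir := dagDir G
  undir _ _ := False
  undir_symm := by intro a b h; exact h.elim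

/-- The set S of selection nodes of G''. -/
def selNodes (G : MixedGraph α) : Set ((α ⊕ α) ⊕ Sym2 α) :=
  {v | ∃ x y, G.undir x y ∧ v = Sum.inr s(x, y)}

/-- The deterministic relationships of G'' (the same as those of G'). -/
def dagDet (G : MixedGraph α) : Set (Set ((α ⊕ α) ⊕ Sym2 α) × ((α ⊕ α) ⊕ Sym2 α)) :=
  {p | ∃ q ∈ eampDet G, p = (Sum.inl '' q.1, Sum.inl q.2)}

/-- Structural characterization of EAMP CGs over `W ∪ ε`: a chain graph whose
undirected edges join only error nodes and whose error nodes have no incoming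
directed edges. -/
def IsEAMPStruct (G : MixedGraph (α ⊕ α)) : Prop :=
  G.IsChainGraph ∧
  (∀ a b, G.undir a b → (∃ x, a = Sum.inr x) ∧ ∃ y, b = Sum.inr y) ∧
  (∀ a x, ¬ G.dir a (Sum.inr x))

/-- K is a connectivity component: a maximal set connected by undirected paths. -/
def IsConnComp {β : Type*} (G : MixedGraph β) (K : Set β) : Prop :=
  ∃ a, K = {b | Relation.ReflTransGen G.undir a b}

end EAMP


namespace MixedGraph

variable {β γ : Type*}

theorem mem_of_semidirectedCycle (H : MixedGraph β) {S : Set β}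
    (hdir : ∀ a b, H.dir a b → b ∈ S) (hundir : ∀ a ∈ S, ∀ b, ¬ H.undir a b)
    {n : ℕ} {f : Fin (n + 2) → β} (hclosed : f 0 = f (Fin.last (n + 1)))
    (hfirst : H.dir (f 0) (f 1))
    (hstep : ∀ i : Fin (n + 1), H.dir (f i.castSucc) (f i.succ) ∨ H.undir (f i.castSucc) (f i.succ))
    (i : Fin (n + 2)) : f i ∈ S := by
  have hsucc : ∀ k : Fin (n + 1), f k.succ ∈ S := by
    refine Fin.induction (by simpa using hdir _ _ hfirst) fun k hk => ?_
    rw [Fin.succ_castSucc] at hk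
    rcases hstep k.succ with h | h
    · exact hdir _ _ h
    · exact absurd h (hundir _ hk _)
  refine Fin.cases ?_ hsucc i
  rw [hclosed]
  exact hsucc (Fin.last n)

theorem hasSemidirectedCycle_of_forall_mem_range {G : MixedGraph β} {H : MixedGraph γ}
    {φ : β → γ} (hφ : Function.Injective φ) (hdir : ∀ a b, H.dir (φ a) (φ b) → G.dir a b)
    (hundir : ∀ a b, H.undir (φ a) (φ b) → G.undir a b)
    {n : ℕ} {f : Fin (n + 2) → γ} (hclosed : f 0 = f (Fin.last (n + 1)))
    (hfirst : H.dir (f 0) (f 1))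
    (hstep : ∀ i : Fin (n + 1), H.dir (f i.castSucc) (f i.succ) ∨ H.undir (f i.castSucc) (f i.succ))
    (hrange : ∀ i, f i ∈ Set.range φ) : G.HasSemidirectedCycle := by
  choose g hg using hrange
  simp only [← hg] at hclosed hfirst hstep
  exact ⟨n, g, hφ hclosed, hdir _ _ hfirst,
    fun i => (hstep i).imp (hdir _ _) (hundir _ _)⟩

end MixedGraph

section EAMP

variable {α : Type*} (G : MixedGraph α)

theorem eamp_simple (hG : G.Simple) : (eamp G).Simple := by
  obtain ⟨hloop, huloop, hasym, -⟩ := hG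
  refine ⟨?_, ?_, ?_, ?_⟩
  · rintro (a | a) h
    exacts [hloop a h, h]
  · rintro (a | a) h
    exacts [h, huloop a h]
  · rintro (a | a) (b | b) h h'
    exacts [hasym a b h h', h, h', h]
  · rintro (a | a) (b | b) h h'
    exacts [h', h', h', h]

theorem eamp_dir_mem_range_inl : ∀ a b, (eamp G).dir a b → b ∈ Set.range Sum.inl
  | _, Sum.inl b, _ => ⟨b, rfl⟩
  | Sum.inl _, Sum.inr _, h => nomatch h
  | Sum.inr _, Sum.inr _, h => nomatch h

theorem eamp_not_undir_inl : ∀ a ∈ Set.range Sum.inl, ∀ b, ¬ (eamp G).undir a b := by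
  rintro _ ⟨a, rfl⟩ b h
  exact h

end EAMP

/-- the EAMP CG G' of an AMP CG G has no semidirected cycle,
i.e. it is a chain graph over `V ∪ ε`. -/
theorem stmt0 {α : Type*} (G : MixedGraph α) (hG : G.IsChainGraph) :
    (eamp G).IsChainGraph := by
  refine ⟨eamp_simple G hG.1, ?_⟩
  rintro ⟨n, f, hclosed, hfirst, hstep⟩
  -- Error nodes only have outgoing arrows, and undirected edges only join error nodes,
  -- so after its first arrow the cycle never leaves the original nodes.
  have hrange := (eamp G).mem_of_semidirectedCycle (eamp_dir_mem_range_inl G)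
    (eamp_not_undir_inl G) hclosed hfirst hstep
  exact hG.2 (MixedGraph.hasSemidirectedCycle_of_forall_mem_range Sum.inl_injective
    (fun _ _ h => h) (fun _ _ => False.elim) hclosed hfirst hstep hrange)
end

section
/- Let G be an AMP CG over V and G' its EAMP CG. For any Z ⊆ V, a node B ∈ V belongs to the set D(Z) of nodes determined by Z (under the deterministic relationships of G', where each A ∈ V is a function of pa_{G'}(A) and each ε^A is a function of (pa_{G'}(A) \ {ε^A}) ∪ {A}) if and only if B ∈ Z. -/
/- Every deterministic relationship of G' that determines a node needs that node's twin
(A needs ε^A and ε^A needs A), so the closure of Sum.inl '' Z under them never leaves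
Sum.inl '' Z ∪ Sum.inr '' Z, the nodes whose underlying node of G lies in Z. -/

namespace MixedGraph

theorem Determined.mem_of_closed {β : Type*} {det : Set (Set β × β)} {Z P : Set β} (hZ : Z ⊆ P)
    (hP : ∀ S a, (S, a) ∈ det → S ⊆ P → a ∈ P) {a : β} (h : Determined det Z a) : a ∈ P := by
  induction h with
  | base a ha => exact hZ ha
  | step S a hSa _ ih => exact hP S a hSa ih

end MixedGraph

theorem swap_mem_of_mem_eampDet {α : Type*} {G : MixedGraph α} {S : Set (α ⊕ α)} {a : α ⊕ α}
    (h : (S, a) ∈ eampDet G) : a.swap ∈ S := by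
  rcases h with ⟨A, hA⟩ | ⟨A, hA⟩ <;>
    obtain ⟨rfl, rfl⟩ := Prod.mk.inj hA <;>
    simp

theorem elim_id_id_mem_of_determined_eampDet {α : Type*} {G : MixedGraph α} {Z : Set α}
    {x : α ⊕ α} (h : MixedGraph.Determined (eampDet G) (Sum.inl '' Z) x) :
    Sum.elim id id x ∈ Z := by
  refine MixedGraph.Determined.mem_of_closed (P := Sum.elim id id ⁻¹' Z) ?_ ?_ h
  · rintro _ ⟨b, hb, rfl⟩
    exact hb
  · intro S a hSa hS
    have htwin := hS (swap_mem_of_mem_eampDet hSa)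
    cases a <;> simpa using htwin

theorem stmt3_general {α : Type*} (G : MixedGraph α) (Z : Set α) (B : α) :
    MixedGraph.Determined (eampDet G) (Sum.inl '' Z) (Sum.inl B) ↔ B ∈ Z :=
  ⟨elim_id_id_mem_of_determined_eampDet, fun hB => .base _ ⟨B, hB, rfl⟩⟩

/-- for `Z ⊆ V`, a node `B ∈ V` is determined by Z under the
deterministic relationships of the EAMP CG G' iff `B ∈ Z`. -/
theorem stmt3 {α : Type*} (G : MixedGraph α) (hG : G.IsChainGraph) (Z : Set α) (B : α) :
    MixedGraph.Determined (eampDet G) (Sum.inl '' Z) (Sum.inl B) ↔ B ∈ Z :=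
  stmt3_general G Z B
end

section
/- Let G be an AMP CG over V and G' its EAMP CG. For any α, β ∈ V and Z ⊆ V \ {α, β}, every Z-open path between α and β in G can be transformed into a Z-open path between α and β in G' by replacing every maximal undirected subpath V_1 − V_2 − ... − V_n (n ≥ 2) with V_1 ← ε^{V_1} − ε^{V_2} − ... − ε^{V_n} → V_n; the resulting path is Z-open in G' under the deterministic-node semantics. -/
/-!
A maximal undirected run `V₁ − ⋯ − Vₙ` of the path is rerouted as `V₁ ← ε^V₁ − ⋯ − ε^Vₙ → Vₙ`.
In G' a node `X` is determined by Z iff `X ∈ Z`, and `ε^X` iff X and all its parents in G are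
in Z. An error node has no parents in G', so it is never a triplex node and must simply not be
determined. This holds because on a Z-open path every node of Z has a parent outside Z: a node
with an outgoing arrow along the path is a non-triplex node without undirected edges there, hence
not in Z; so a node of Z either receives an arrow from a path neighbour, which is then a parent
outside Z, or has undirected edges on both sides, and then Z-openness provides such a parent.
At an original node the triple of the new path is a triplex node in G' exactly when the old
triple is one in G, so the conditions carry over unchanged.
-/

namespace List

variable {β : Type*}

def ForallTriples (P : β → β → β → Prop) (l : List β) : Prop :=
  ∀ A B C, [A, B, C] <:+: l → P A B C

theorem forallTriples_nil (P : β → β → β → Prop) : ForallTriples P [] := by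
  intro A B C h
  simpa using h.sublist.length_le

theorem ForallTriples.cons {P : β → β → β → Prop} {u : β} {l : List β}
    (hhead : ∀ B C, [B, C] <+: l → P u B C) (htail : ForallTriples P l) :
    ForallTriples P (u :: l) := by
  intro A B C h
  rcases infix_cons_iff.mp h with h | h
  · obtain ⟨rfl, hBC⟩ := cons_prefix_cons.mp h
    exact hhead B C hBC
  · exact htail A B C h

theorem ForallTriples.cons_cons {P : β → β → β → Prop} {u v : β} {l : List β}
    (hhead : ∀ C, P u v C) (htail : ForallTriples P (v :: l)) : ForallTriples P (u :: v :: l) :=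
  htail.cons fun B C h => by
    obtain ⟨rfl, -⟩ := cons_prefix_cons.mp h
    exact hhead C

theorem IsInfix.head?_eq_or_extend_left {x y : β} {l : List β} (h : [x, y] <:+: l) :
    l.head? = some x ∨ ∃ w, [w, x, y] <:+: l := by
  obtain ⟨s, t, rfl⟩ := h
  rcases s.eq_nil_or_concat with rfl | ⟨s, w, rfl⟩
  · simp
  · exact Or.inr ⟨w, s, t, by simp⟩

theorem IsInfix.getLast?_eq_or_extend_right {x y : β} {l : List β} (h : [x, y] <:+: l) :
    l.getLast? = some y ∨ ∃ z, [x, y, z] <:+: l := by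
  obtain ⟨s, t, rfl⟩ := h
  rcases t with _ | ⟨z, t⟩
  · simp
  · exact Or.inr ⟨z, s, t, by simp⟩

theorem head?_eq_or_getLast?_eq_or_infix_of_mem {x : β} {l : List β} (h : x ∈ l) :
    l.head? = some x ∨ l.getLast? = some x ∨ ∃ w y, [w, x, y] <:+: l := by
  obtain ⟨s, t, rfl⟩ := append_of_mem h
  rcases s.eq_nil_or_concat with rfl | ⟨s, w, rfl⟩
  · simp
  rcases t with _ | ⟨y, t⟩
  · simp
  · exact Or.inr (Or.inr ⟨w, y, s, t, by simp⟩)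

end List

namespace MixedGraph

section

variable {β : Type*} {G : MixedGraph β} {D : Set β} {l : List β} {w x y : β}

theorem triplex_comm : G.triplex w x y ↔ G.triplex y x w := by
  have := G.undir_symm
  unfold triplex
  grind

theorem Simple.not_triplex_of_dir (hG : G.Simple) (h : G.dir x y) : ¬ G.triplex w x y := by
  rintro (⟨-, hyx⟩ | ⟨-, hxy⟩ | ⟨-, hyx⟩)
  · exact hG.2.2.1 x y h hyx
  · exact hG.2.2.2 x y h hxy
  · exact hG.2.2.1 x y h hyx

theorem IsRoute.adj_of_infix (hl : G.IsRoute l) (h : [x, y] <:+: l) : G.adj x y :=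
  List.isChain_pair.mp (hl.2.infix h)

theorem IsRoute.nontriplex_of_infix (hl : G.IsRoute l) (h : [w, x, y] <:+: l)
    (ht : ¬ G.triplex w x y) : G.nontriplex w x y :=
  ⟨hl.adj_of_infix (List.IsInfix.trans ⟨[], [y], rfl⟩ h),
    hl.adj_of_infix (List.IsInfix.trans ⟨[w], [], rfl⟩ h), ht⟩

theorem AMPOpenPath.not_mem_of_dir_next (hG : G.Simple) (hl : G.AMPOpenPath D l)
    (ha : ∀ a ∈ l.head?, a ∉ D) (h : [x, y] <:+: l) (hxy : G.dir x y) : x ∉ D := by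
  rcases h.head?_eq_or_extend_left with hx | ⟨w, hw⟩
  · exact ha x hx
  · intro hxD
    have hnt := hl.1.nontriplex_of_infix hw (hG.not_triplex_of_dir hxy)
    exact hG.2.2.2 x y hxy (hl.2.2.2 w x y hw hnt hxD).2.1

theorem AMPOpenPath.not_mem_of_dir_prev (hG : G.Simple) (hl : G.AMPOpenPath D l)
    (hb : ∀ b ∈ l.getLast?, b ∉ D) (h : [y, x] <:+: l) (hxy : G.dir x y) : x ∉ D := by
  rcases h.getLast?_eq_or_extend_right with hx | ⟨z, hz⟩
  · exact hb x hx
  · intro hxD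
    have hnt := hl.1.nontriplex_of_infix hz (triplex_comm.not.mpr (hG.not_triplex_of_dir hxy))
    exact hG.2.2.2 x y hxy (G.undir_symm _ _ (hl.2.2.2 y x z hz hnt hxD).1)

theorem AMPOpenPath.not_mem_or_exists_parent (hG : G.Simple) (hl : G.AMPOpenPath D l)
    (ha : ∀ a ∈ l.head?, a ∉ D) (hb : ∀ b ∈ l.getLast?, b ∉ D) (hx : x ∈ l) :
    x ∉ D ∨ ∃ p, G.dir p x ∧ p ∉ D := by
  by_cases hxD : x ∈ D
  · right
    obtain hhead | hlast | ⟨w, y, h⟩ := List.head?_eq_or_getLast?_eq_or_infix_of_mem hx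
    · exact absurd hxD (ha x hhead)
    · exact absurd hxD (hb x hlast)
    by_cases ht : G.triplex w x y
    · have hparent : G.dir w x ∨ G.dir y x := by
        rcases ht with ⟨hwx, -⟩ | ⟨hwx, -⟩ | ⟨-, hyx⟩
        exacts [Or.inl hwx, Or.inl hwx, Or.inr hyx]
      rcases hparent with hwx | hyx
      · exact ⟨w, hwx, hl.not_mem_of_dir_next hG ha (List.IsInfix.trans ⟨[], [y], rfl⟩ h) hwx⟩
      · exact ⟨y, hyx, hl.not_mem_of_dir_prev hG hb (List.IsInfix.trans ⟨[w], [], rfl⟩ h) hyx⟩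
    · obtain ⟨-, -, p, ⟨-, x', hx', hpx⟩, hpD⟩ :=
        hl.2.2.2 w x y h (hl.1.nontriplex_of_infix h ht) hxD
      rw [Set.mem_singleton_iff.mp hx'] at hpx
      exact ⟨p, hpx, hpD⟩
  · exact Or.inl hxD

def StrictlyOpenAt (G : MixedGraph β) (D : Set β) (A B C : β) : Prop :=
  (G.triplex A B C → B ∈ D ∪ G.san D) ∧ (¬ G.triplex A B C → B ∉ D)

theorem AMPOpenPath.of_forallTriples (hr : G.IsRoute l) (hnd : l.Nodup)
    (h : l.ForallTriples (G.StrictlyOpenAt D)) : G.AMPOpenPath D l :=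
  ⟨hr, hnd, fun A B C hi ht => (h A B C hi).1 ht,
    fun A B C hi hnt hB => absurd hB ((h A B C hi).2 hnt.2.2)⟩

end

section

open Sum
open scoped Classical

variable {α : Type*} {G : MixedGraph α} {Z : Set α} {l : List α} {w x y : α}

@[simp]
theorem eamp_not_dir_inr (v : α ⊕ α) : ¬ (eamp G).dir v (inr x) := by
  cases v <;> exact id

theorem determined_eampDet {v : α ⊕ α} (h : Determined (eampDet G) (inl '' Z) v) :
    Sum.elim (· ∈ Z) (fun x => x ∈ Z ∧ ∀ p, G.dir p x → p ∈ Z) v := by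
  induction h with
  | base v hv =>
    obtain ⟨x, hx, rfl⟩ := hv
    exact hx
  | step S v hdet _ ih =>
    rcases hdet with ⟨x, hSv⟩ | ⟨x, hSv⟩ <;> obtain ⟨rfl, rfl⟩ := Prod.mk.inj hSv
    · exact (ih (inr x) (by simp)).1
    · exact ⟨ih (inl x) (by simp), fun p hp => ih (inl p) (Or.inl ⟨p, hp, rfl⟩)⟩

theorem inl_mem_dSet_eampDet : inl x ∈ DSet (eampDet G) (inl '' Z) ↔ x ∈ Z :=
  ⟨determined_eampDet, fun hx => Determined.base _ ⟨x, hx, rfl⟩⟩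

theorem inr_mem_dSet_eampDet :
    inr x ∈ DSet (eampDet G) (inl '' Z) ↔ x ∈ Z ∧ ∀ p, G.dir p x → p ∈ Z := by
  refine ⟨determined_eampDet, fun ⟨hx, hpa⟩ => Determined.step _ _ (Or.inr ⟨x, rfl⟩) ?_⟩
  rintro v (⟨p, hp, rfl⟩ | rfl)
  exacts [Determined.base _ ⟨p, hpa p hp, rfl⟩, Determined.base _ ⟨x, hx, rfl⟩]

theorem inl_mem_dSet_eampDet_union_san (hx : x ∈ Z ∪ G.san Z) :
    inl x ∈ DSet (eampDet G) (inl '' Z) ∪ (eamp G).san (DSet (eampDet G) (inl '' Z)) := by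
  rcases hx with hx | ⟨hxZ, z, hz, hxz⟩
  · exact Or.inl (inl_mem_dSet_eampDet.mpr hx)
  · exact Or.inr ⟨inl_mem_dSet_eampDet.not.mpr hxZ, inl z, inl_mem_dSet_eampDet.mpr hz,
      Relation.TransGen.lift inl (fun _ _ h => h) _ _ hxz⟩

@[simp]
theorem eamp_adj_inl_inl : (eamp G).adj (inl x) (inl y) ↔ G.dir x y ∨ G.dir y x := by
  simp [adj, eamp, eampDir, eampUndir]

@[simp]
theorem eamp_adj_inr_inr : (eamp G).adj (inr x) (inr y) ↔ G.undir x y := by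
  simp [adj, eamp, eampDir, eampUndir]

@[simp]
theorem eamp_adj_inl_inr_self : (eamp G).adj (inl x) (inr x) := Or.inr (Or.inl rfl)

@[simp]
theorem eamp_adj_inr_inl_self : (eamp G).adj (inr x) (inl x) := Or.inl rfl

theorem eamp_not_triplex_inr (A C : α ⊕ α) : ¬ (eamp G).triplex A (inr x) C := by
  simp [triplex]

theorem eamp_triplex_inl_iff :
    (eamp G).triplex (if G.undir w x then inr x else inl w) (inl x)
        (if G.undir x y then inr x else inl y) ↔
      G.triplex w x y ∨ G.undir w x ∧ G.undir x y := by
  by_cases hwx : G.undir w x <;> by_cases hxy : G.undir x y <;>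
    simp only [triplex, eamp, eampDir, eampUndir, hwx, hxy, if_true, if_false] <;> tauto

theorem AMPOpenPath.strictlyOpenAt_eamp_inr (hG : G.Simple) (hl : G.AMPOpenPath Z l)
    (ha : ∀ a ∈ l.head?, a ∉ Z) (hb : ∀ b ∈ l.getLast?, b ∉ Z) (hx : x ∈ l) (A C : α ⊕ α) :
    (eamp G).StrictlyOpenAt (DSet (eampDet G) (inl '' Z)) A (inr x) C := by
  refine ⟨fun ht => absurd ht (eamp_not_triplex_inr A C), fun _ hxD => ?_⟩
  obtain ⟨hxZ, hpa⟩ := inr_mem_dSet_eampDet.mp hxD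
  rcases hl.not_mem_or_exists_parent hG ha hb hx with hx | ⟨p, hp, hpZ⟩
  exacts [hx hxZ, hpZ (hpa p hp)]

theorem AMPOpenPath.strictlyOpenAt_eamp_inl (hl : G.AMPOpenPath Z l) (h : [w, x, y] <:+: l)
    (hrun : ¬ (G.undir w x ∧ G.undir x y)) :
    (eamp G).StrictlyOpenAt (DSet (eampDet G) (inl '' Z))
      (if G.undir w x then inr x else inl w) (inl x) (if G.undir x y then inr x else inl y) := by
  rw [StrictlyOpenAt, eamp_triplex_inl_iff, or_iff_left hrun, inl_mem_dSet_eampDet]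
  refine ⟨fun ht => inl_mem_dSet_eampDet_union_san (hl.2.2.1 w x y h ht), fun ht hxZ => ?_⟩
  obtain ⟨hwx, hxy, -⟩ := hl.2.2.2 w x y h (hl.1.nontriplex_of_infix h ht) hxZ
  exact hrun ⟨hwx, hxy⟩

/-- The flag records whether the edge entering the head of the list is undirected. -/
noncomputable def liftPath (G : MixedGraph α) : Bool → List α → List (α ⊕ α)
  | _, [] => []
  | false, [x] => [inl x]
  | true, [x] => [inr x, inl x]
  | false, x :: y :: t =>
      if G.undir x y then inl x :: inr x :: liftPath G true (y :: t)
      else inl x :: liftPath G false (y :: t)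
  | true, x :: y :: t =>
      if G.undir x y then inr x :: liftPath G true (y :: t)
      else inr x :: inl x :: liftPath G false (y :: t)

@[simp]
theorem head?_liftPath (b : Bool) (x : α) (t : List α) :
    (liftPath G b (x :: t)).head? = some (if b then inr x else inl x) := by
  rcases t with _ | ⟨y, t⟩ <;> cases b <;> simp [liftPath] <;> split_ifs <;> rfl

theorem head?_liftPath_false : (liftPath G false l).head? = l.head?.map inl := by
  cases l <;> simp [liftPath]

theorem liftPath_ne_nil (b : Bool) (hl : l ≠ []) : liftPath G b l ≠ [] := by
  obtain ⟨x, t, rfl⟩ := List.exists_cons_of_ne_nil hl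
  exact fun h => by simpa [h] using head?_liftPath (G := G) b x t

theorem exists_liftPath_cons (b : Bool) (x : α) (t : List α) :
    ∃ r, liftPath G b (x :: t) = (if b then inr x else inl x) :: r := by
  obtain ⟨c, r, hcr⟩ := List.exists_cons_of_ne_nil (liftPath_ne_nil (G := G) b (List.cons_ne_nil x t))
  have hc : c = if b then inr x else inl x := by simpa [hcr] using head?_liftPath (G := G) b x t
  exact ⟨r, hcr.trans (by rw [hc])⟩

theorem getLast?_liftPath (b : Bool) (l : List α) :
    (liftPath G b l).getLast? = l.getLast?.map inl := by
  induction l generalizing b with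
  | nil => cases b <;> rfl
  | cons x t ih =>
    rcases t with _ | ⟨y, t⟩
    · cases b <;> rfl
    · cases b <;> simp only [liftPath] <;> split_ifs <;>
        simp [List.getLast?_cons_of_ne_nil, liftPath_ne_nil, ih]

theorem isChain_liftPath (b : Bool) (hl : l.IsChain G.adj) :
    (liftPath G b l).IsChain (eamp G).adj := by
  induction l generalizing b with
  | nil => cases b <;> simp [liftPath]
  | cons x t ih =>
    rcases t with _ | ⟨y, t⟩
    · cases b <;> simp [liftPath]
    · obtain ⟨hxy, ht⟩ := List.isChain_cons_cons.mp hl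
      have hdir : ¬ G.undir x y → G.dir x y ∨ G.dir y x := by
        rcases hxy with h | h | h <;> simp [h]
      cases b <;> simp only [liftPath] <;> split_ifs with h <;>
        simp [List.isChain_cons, ih _ ht, h, hdir]

theorem elim_mem_of_mem_liftPath {b : Bool} {v : α ⊕ α} (h : v ∈ liftPath G b l) :
    v.elim id id ∈ l := by
  induction l generalizing b with
  | nil => cases b <;> simp [liftPath] at h
  | cons x t ih =>
    rcases t with _ | ⟨y, t⟩
    · cases b <;> simp [liftPath] at h <;> rcases h with rfl | rfl <;> simp
    · cases b <;> simp only [liftPath] at h <;> split_ifs at h <;> simp only [List.mem_cons] at h <;>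
        grind

theorem nodup_liftPath (b : Bool) (hl : l.Nodup) : (liftPath G b l).Nodup := by
  induction l generalizing b with
  | nil => cases b <;> simp [liftPath]
  | cons x t ih =>
    rcases t with _ | ⟨y, t⟩
    · cases b <;> simp [liftPath]
    · obtain ⟨hx, ht⟩ := List.nodup_cons.mp hl
      have hnot (b' : Bool) : inl x ∉ liftPath G b' (y :: t) ∧ inr x ∉ liftPath G b' (y :: t) :=
        ⟨fun h => hx (elim_mem_of_mem_liftPath h), fun h => hx (elim_mem_of_mem_liftPath h)⟩
      cases b <;> simp only [liftPath] <;> split_ifs <;> simp [ih _ ht, hnot]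

theorem exists_liftPath_false_cons_cons (x y : α) (t : List α) :
    ∃ r, liftPath G false (x :: y :: t) =
      inl x :: (if G.undir x y then inr x else inl y) :: r := by
  by_cases h : G.undir x y
  · exact ⟨liftPath G true (y :: t), by simp [liftPath, h]⟩
  · obtain ⟨r, hr⟩ := exists_liftPath_cons (G := G) false y t
    exact ⟨r, by simp [liftPath, h, hr]⟩

theorem forallTriples_inl_cons_liftPath {P : (α ⊕ α) → (α ⊕ α) → (α ⊕ α) → Prop} {t : List α}
    (hnode : ∀ w x y, [w, x, y] <:+: l → ¬ (G.undir w x ∧ G.undir x y) →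
      P (if G.undir w x then inr x else inl w) (inl x) (if G.undir x y then inr x else inl y))
    (hs : x :: y :: t <:+ l) (hxy : ¬ G.undir x y)
    (ht : (liftPath G false (y :: t)).ForallTriples P) :
    (inl x :: liftPath G false (y :: t)).ForallTriples P := by
  refine ht.cons fun B C h => ?_
  rcases t with _ | ⟨z, t⟩
  · simp [liftPath] at h
  · obtain ⟨r, hr⟩ := exists_liftPath_false_cons_cons (G := G) y z t
    obtain ⟨rfl, rfl⟩ : B = inl y ∧ C = if G.undir y z then inr y else inl z := by
      simpa [hr] using h
    simpa [hxy] using hnode x y z (List.IsInfix.trans ⟨[], t, rfl⟩ hs.isInfix) (hxy ·.1)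

/-- The flag `true` is handled together with the error node `ε^w` preceding the list, so that
the triples straddling the boundary are covered. -/
theorem forallTriples_liftPath_of_suffix {P : (α ⊕ α) → (α ⊕ α) → (α ⊕ α) → Prop}
    (herr : ∀ x ∈ l, ∀ A C, P A (inr x) C)
    (hnode : ∀ w x y, [w, x, y] <:+: l → ¬ (G.undir w x ∧ G.undir x y) →
      P (if G.undir w x then inr x else inl w) (inl x) (if G.undir x y then inr x else inl y))
    (t : List α) : ∀ x, x :: t <:+ l → (liftPath G false (x :: t)).ForallTriples P ∧
      ∀ w, w :: x :: t <:+ l → G.undir w x →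
        (inr w :: liftPath G true (x :: t)).ForallTriples P := by
  induction t with
  | nil =>
    intro x hx
    have hxl : x ∈ l := hx.subset (by simp)
    refine ⟨(List.forallTriples_nil P).cons (by simp), fun w _ _ => ?_⟩
    simp only [liftPath]
    exact (((List.forallTriples_nil P).cons (by simp)).cons (by simp)).cons_cons
      fun C => herr x hxl _ _
  | cons y t ih =>
    intro x hx
    have hxl : x ∈ l := hx.subset (by simp)
    obtain ⟨ihf, iht⟩ := ih y ((List.suffix_cons x _).trans hx)
    refine ⟨?_, fun w hw hwx => ?_⟩ <;> by_cases hxy : G.undir x y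
    · simp only [liftPath, if_pos hxy]
      exact (iht x hx hxy).cons_cons fun C => herr x hxl _ _
    · simpa [liftPath, hxy] using forallTriples_inl_cons_liftPath hnode hx hxy ihf
    · simp only [liftPath, if_pos hxy]
      exact (iht x hx hxy).cons_cons fun C => herr x hxl _ _
    · simp only [liftPath, if_neg hxy]
      have hinl := forallTriples_inl_cons_liftPath hnode hx hxy ihf
      obtain ⟨r, hr⟩ := exists_liftPath_cons (G := G) false y t
      refine (hinl.cons fun B C h => ?_).cons_cons fun C => herr x hxl _ _
      obtain ⟨rfl, rfl⟩ : B = inl x ∧ C = inl y := by simpa [hr] using h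
      simpa [hwx, hxy] using hnode w x y (List.IsInfix.trans ⟨[], t, rfl⟩ hw.isInfix) (hxy ·.2)

theorem forallTriples_liftPath {P : (α ⊕ α) → (α ⊕ α) → (α ⊕ α) → Prop}
    (herr : ∀ x ∈ l, ∀ A C, P A (inr x) C)
    (hnode : ∀ w x y, [w, x, y] <:+: l → ¬ (G.undir w x ∧ G.undir x y) →
      P (if G.undir w x then inr x else inl w) (inl x) (if G.undir x y then inr x else inl y)) :
    (liftPath G false l).ForallTriples P := by
  rcases l with _ | ⟨x, t⟩
  · exact List.forallTriples_nil P
  · exact (forallTriples_liftPath_of_suffix herr hnode t x (List.suffix_refl _)).1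

end

end MixedGraph

/-- every Z-open path between `a` and `b` in G can be transformed
into a Z-open path between `a` and `b` in the EAMP CG G' (under the
deterministic-node semantics of G'). -/
theorem stmt5 {α : Type*} (G : MixedGraph α) (hG : G.IsChainGraph)
    (a b : α) (Z : Set α) (haZ : a ∉ Z) (hbZ : b ∉ Z)
    (l : List α) (hl : G.AMPOpenPath Z l)
    (ha : l.head? = some a) (hb : l.getLast? = some b) :
    ∃ l' : List (α ⊕ α), l'.head? = some (Sum.inl a) ∧ l'.getLast? = some (Sum.inl b) ∧
      (eamp G).AMPOpenPath (MixedGraph.DSet (eampDet G) (Sum.inl '' Z)) l' := by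
  have hhead : ∀ x ∈ l.head?, x ∉ Z := by simpa [ha] using haZ
  have hlast : ∀ x ∈ l.getLast?, x ∉ Z := by simpa [hb] using hbZ
  refine ⟨G.liftPath false l, by simp [MixedGraph.head?_liftPath_false, ha],
    by simp [MixedGraph.getLast?_liftPath, hb],
    .of_forallTriples ⟨MixedGraph.liftPath_ne_nil false hl.1.1,
      MixedGraph.isChain_liftPath false hl.1.2⟩
      (MixedGraph.nodup_liftPath false hl.2.1) (MixedGraph.forallTriples_liftPath ?_ ?_)⟩
  · exact fun x hx A C => hl.strictlyOpenAt_eamp_inr hG.1 hhead hlast hx A C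
  · exact fun w x y h hrun => hl.strictlyOpenAt_eamp_inl h hrun
end
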